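/- The geometric mean of Hermitian positive definite matrices is congruence invariant: for any invertible matrix M, G(M* A M, M* B M) = M* G(A,B) M. -/

import Mathlib

open Matrix
open scoped ComplexOrder

/-- The unique Hermitian positive semidefinite square root of a positive semidefinite
matrix (junk value `0` if the matrix is not positive semidefinite). For a Hermitian
positive definite matrix this is the unique Hermitian positive definite square root. -/
noncomputable def matSqrt {m : ℕ} (A : Matrix (Fin m) (Fin m) ℂ) : Matrix (Fin m) (Fin m) ℂ :=
  letI := Classical.dec A.PosSemidef
  if h : A.PosSemidef then
    (h.1.eigenvectorUnitary : Matrix (Fin m) (Fin m) ℂ) *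
      diagonal ((↑) ∘ Real.sqrt ∘ h.1.eigenvalues) *
      (star h.1.eigenvectorUnitary : Matrix (Fin m) (Fin m) ℂ)
  else 0

/-- The geometric mean `G(A,B) = A^{1/2} (A^{-1/2} B A^{-1/2})^{1/2} A^{1/2}`
of two Hermitian positive definite matrices. -/
noncomputable def geoMean {m : ℕ} (A B : Matrix (Fin m) (Fin m) ℂ) : Matrix (Fin m) (Fin m) ℂ :=
  matSqrt A * matSqrt ((matSqrt A)⁻¹ * B * (matSqrt A)⁻¹) * matSqrt A

/-! `G(A, B)` is the unique positive semidefinite solution `X` of the Riccati equation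
`X A⁻¹ X = B`, and `X ↦ M* X M` carries solutions for `(A, B)` to solutions for
`(M* A M, M* B M)`. -/

open scoped MatrixOrder

section Congruence

variable {n α : Type*} [Fintype n] [DecidableEq n] [CommRing α]

lemma inv_mul_mul_mul_mul_inv {R : Matrix n n α} (hR : IsUnit R.det) (Y : Matrix n n α) :
    R⁻¹ * (R * Y * R) * R⁻¹ = Y := by
  simp only [Matrix.mul_assoc, Matrix.nonsing_inv_mul_cancel_left _ _ hR,
    Matrix.mul_nonsing_inv _ hR, Matrix.mul_one]

lemma mul_mul_eq_iff_eq_inv_mul_mul_inv {R Y Z : Matrix n n α} (hR : IsUnit R.det) :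
    R * Y * R = Z ↔ Y = R⁻¹ * Z * R⁻¹ := by
  constructor <;> rintro rfl
  · exact (inv_mul_mul_mul_mul_inv hR Y).symm
  · simp only [Matrix.mul_assoc, Matrix.mul_nonsing_inv_cancel_left _ _ hR,
      Matrix.nonsing_inv_mul _ hR, Matrix.mul_one]

lemma conjTranspose_mul_mul_mul_inv_mul [StarRing α] {M A X Y : Matrix n n α}
    (hM : IsUnit M.det) :
    Mᴴ * X * M * (Mᴴ * A * M)⁻¹ * (Mᴴ * Y * M) = Mᴴ * (X * A⁻¹ * Y) * M := by
  have hMH : IsUnit Mᴴ.det := by rw [det_conjTranspose]; exact hM.star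
  simp only [Matrix.mul_inv_rev, Matrix.mul_assoc, Matrix.mul_nonsing_inv_cancel_left _ _ hM,
    Matrix.nonsing_inv_mul_cancel_left _ _ hMH]

end Congruence

section matSqrt

variable {m : ℕ} {A : Matrix (Fin m) (Fin m) ℂ}

lemma matSqrt_eq_cfcSqrt (hA : A.PosSemidef) : matSqrt A = CFC.sqrt A := by
  rw [CFC.sqrt_eq_real_sqrt A hA.nonneg, cfcₙ_eq_cfc, hA.1.cfc_eq, IsHermitian.cfc,
    Unitary.conjStarAlgAut_apply]
  exact dif_pos hA

lemma posSemidef_matSqrt (A : Matrix (Fin m) (Fin m) ℂ) : (matSqrt A).PosSemidef := by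
  by_cases hA : A.PosSemidef
  · rw [matSqrt_eq_cfcSqrt hA]
    exact (CFC.sqrt_nonneg A).posSemidef
  · rw [matSqrt, dif_neg hA]
    exact PosSemidef.zero

lemma matSqrt_mul_self (hA : A.PosSemidef) : matSqrt A * matSqrt A = A := by
  rw [matSqrt_eq_cfcSqrt hA]
  exact CFC.sqrt_mul_sqrt_self A hA.nonneg

lemma mul_self_eq_iff_eq_matSqrt {X : Matrix (Fin m) (Fin m) ℂ} (hA : A.PosSemidef)
    (hX : X.PosSemidef) : X * X = A ↔ X = matSqrt A := by
  rw [matSqrt_eq_cfcSqrt hA, ← CFC.sqrt_eq_iff A X hA.nonneg hX.nonneg, eq_comm]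

lemma isUnit_det_matSqrt (hA : A.PosDef) : IsUnit (matSqrt A).det := by
  have h : IsUnit ((matSqrt A).det * (matSqrt A).det) := by
    rw [← det_mul, matSqrt_mul_self hA.posSemidef, ← isUnit_iff_isUnit_det]
    exact hA.isUnit
  exact isUnit_of_mul_isUnit_left h

end matSqrt

section geoMean

variable {m : ℕ}

lemma posSemidef_geoMean (A B : Matrix (Fin m) (Fin m) ℂ) : (geoMean A B).PosSemidef := by
  have h := (posSemidef_matSqrt ((matSqrt A)⁻¹ * B * (matSqrt A)⁻¹)).mul_mul_conjTranspose_same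
    (matSqrt A)
  rwa [(posSemidef_matSqrt A).isHermitian.eq] at h

variable {A B X : Matrix (Fin m) (Fin m) ℂ}

/-- With `R = A^{1/2}` and `X = R T R`, the equation `X A⁻¹ X = B` reads `T² = R⁻¹ B R⁻¹`. -/
lemma mul_inv_mul_eq_iff_eq_geoMean (hA : A.PosDef) (hB : B.PosSemidef) (hX : X.PosSemidef) :
    X * A⁻¹ * X = B ↔ X = geoMean A B := by
  set R := matSqrt A
  have hR : IsUnit R.det := isUnit_det_matSqrt hA
  have hRH : R⁻¹ᴴ = R⁻¹ := by
    rw [conjTranspose_nonsing_inv, (posSemidef_matSqrt A).isHermitian.eq]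
  have hS : (R⁻¹ * B * R⁻¹).PosSemidef := by
    simpa only [hRH] using hB.conjTranspose_mul_mul_same R⁻¹
  have hT : (R⁻¹ * X * R⁻¹).PosSemidef := by
    simpa only [hRH] using hX.conjTranspose_mul_mul_same R⁻¹
  obtain ⟨T, rfl⟩ : ∃ T, X = R * T * R :=
    ⟨_, ((mul_mul_eq_iff_eq_inv_mul_mul_inv hR).2 rfl).symm⟩
  rw [inv_mul_mul_mul_mul_inv hR] at hT
  calc R * T * R * A⁻¹ * (R * T * R) = B
      ↔ R * (T * T) * R = B := by
        rw [← show R * R = A from matSqrt_mul_self hA.posSemidef]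
        simp only [Matrix.mul_inv_rev, Matrix.mul_assoc, Matrix.mul_nonsing_inv_cancel_left _ _ hR,
          Matrix.nonsing_inv_mul_cancel_left _ _ hR]
    _ ↔ T * T = R⁻¹ * B * R⁻¹ := mul_mul_eq_iff_eq_inv_mul_mul_inv hR
    _ ↔ T = matSqrt (R⁻¹ * B * R⁻¹) := mul_self_eq_iff_eq_matSqrt hS hT
    _ ↔ R * T * R = geoMean A B := by
        rw [geoMean, mul_mul_eq_iff_eq_inv_mul_mul_inv hR, inv_mul_mul_mul_mul_inv hR]

end geoMean

theorem geoMean_congruence_invariant {m : ℕ} (A B M : Matrix (Fin m) (Fin m) ℂ)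
    (hA : A.PosDef) (hB : B.PosDef) (hM : IsUnit M.det) :
    geoMean (Mᴴ * A * M) (Mᴴ * B * M) = Mᴴ * geoMean A B * M := by
  have hMU : IsUnit M := (isUnit_iff_isUnit_det M).2 hM
  have hA' : (Mᴴ * A * M).PosDef := hMU.posDef_star_left_conjugate_iff.2 hA
  have hB' : (Mᴴ * B * M).PosDef := hMU.posDef_star_left_conjugate_iff.2 hB
  refine ((mul_inv_mul_eq_iff_eq_geoMean hA' hB'.posSemidef
    ((posSemidef_geoMean A B).conjTranspose_mul_mul_same M)).1 ?_).symm
  rw [conjTranspose_mul_mul_mul_inv_mul hM,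
    (mul_inv_mul_eq_iff_eq_geoMean hA hB.posSemidef (posSemidef_geoMean A B)).2 rfl]
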